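/- arXiv:1810.08164 — 2 statements merged into one kernel-verified Lean document; each statement's English description precedes it below -/
import Mathlib

section
/- Suppose a non-negative random count n_k(T) of pulls of arm k over T rounds satisfies: for each t ≥ K·t₀, Pr(k_{t+1} = k, n_{k*}(t) = max_{k'} n_{k'}(t)) ≤ 2t^{1−α} and Pr(n_{k'}(t) ≥ t/K) ≤ 6K²(t/K)^{2−α} for every k' ≠ k*. Then E[n_k(T)] ≤ K·t₀ + Σ_{t=1}^{T} 2K·t^{1−α} + K³·Σ_{t=K t₀}^{T} 6·(t/K)^{2−α}, which is O(1) (bounded uniformly in T) whenever α > 3. -/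
open MeasureTheory ProbabilityTheory
open scoped ENNReal

/-- Bound on the expected number of pulls of a non-competitive arm: if, for all
`t ≥ K·t₀`, the probability of pulling arm `k` while the optimal arm has the
maximum pull count is at most `2t^{1−α}`, and each suboptimal arm has at least
`t/K` pulls with probability at most `6K²(t/K)^{2−α}`, then
`E[n_k(T)] ≤ K t₀ + Σ_{t=1}^T 2K t^{1−α} + K³ Σ_{t=K t₀}^T 6(t/K)^{2−α}`,
which is bounded uniformly in `T` whenever `α > 3`. -/
theorem noncompetitive_pulls_bound
    {Ω : Type*} [MeasurableSpace Ω] (P : Measure Ω) [IsProbabilityMeasure P]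
    (K : ℕ) (hK : 1 ≤ K) (α : ℝ) (hα : 2 < α) (t₀ : ℕ)
    (A : ℕ → Ω → Fin K) (hA : ∀ t, Measurable (A t))
    (kstar k : Fin K) (hk : k ≠ kstar)
    (n : Fin K → ℕ → Ω → ℕ)
    (hn : ∀ j t ω, n j t ω = ((Finset.Icc 1 t).filter (fun s => A s ω = j)).card)
    (h1 : ∀ t, K * t₀ ≤ t →
      P {ω | A (t + 1) ω = k ∧ n kstar t ω = Finset.univ.sup (fun j => n j t ω)} ≤
        ENNReal.ofReal (2 * (t : ℝ) ^ ((1 : ℝ) - α)))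
    (h2 : ∀ t, K * t₀ ≤ t → ∀ k' : Fin K, k' ≠ kstar →
      P {ω | (t : ℝ) / K ≤ (n k' t ω : ℝ)} ≤
        ENNReal.ofReal (6 * (K : ℝ) ^ 2 * ((t : ℝ) / K) ^ ((2 : ℝ) - α)))
    (T : ℕ) :
    (∫ ω, (n k T ω : ℝ) ∂P ≤
      K * t₀ + (∑ t ∈ Finset.Icc 1 T, 2 * (K : ℝ) * (t : ℝ) ^ ((1 : ℝ) - α)) +
        (K : ℝ) ^ 3 * ∑ t ∈ Finset.Icc (K * t₀) T, 6 * ((t : ℝ) / K) ^ ((2 : ℝ) - α)) ∧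
    (3 < α → ∃ B : ℝ, ∀ T' : ℕ,
      (K : ℝ) * t₀ + (∑ t ∈ Finset.Icc 1 T', 2 * (K : ℝ) * (t : ℝ) ^ ((1 : ℝ) - α)) +
        (K : ℝ) ^ 3 * (∑ t ∈ Finset.Icc (K * t₀) T', 6 * ((t : ℝ) / K) ^ ((2 : ℝ) - α)) ≤ B) := by
  have hKpos : (0:ℝ) < K := by exact_mod_cast hK
  have hK1 : (1:ℝ) ≤ K := by exact_mod_cast hK
  -- Part 2 first (independent of degenerate case)
  have part2 : 3 < α → ∃ B : ℝ, ∀ T' : ℕ,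
      (K : ℝ) * t₀ + (∑ t ∈ Finset.Icc 1 T', 2 * (K : ℝ) * (t : ℝ) ^ ((1 : ℝ) - α)) +
        (K : ℝ) ^ 3 * (∑ t ∈ Finset.Icc (K * t₀) T', 6 * ((t : ℝ) / K) ^ ((2 : ℝ) - α)) ≤ B := by
    intro h3
    have hs1 : Summable (fun t : ℕ => (t:ℝ) ^ ((1:ℝ) - α)) :=
      Real.summable_nat_rpow.mpr (by linarith)
    have hs2 : Summable (fun t : ℕ => 6 * ((t:ℝ)/K) ^ ((2:ℝ) - α)) := by
      have hbase : Summable (fun t : ℕ => (t:ℝ) ^ ((2:ℝ) - α)) :=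
        Real.summable_nat_rpow.mpr (by linarith)
      have := (hbase.div_const ((K:ℝ) ^ ((2:ℝ) - α))).mul_left 6
      refine this.congr fun t => ?_
      rw [Real.div_rpow (Nat.cast_nonneg t) (le_of_lt hKpos)]
    refine ⟨(K:ℝ)*t₀ + 2*(K:ℝ)*(∑' t : ℕ, (t:ℝ) ^ ((1:ℝ)-α)) +
      (K:ℝ)^3 * (∑' t : ℕ, 6 * ((t:ℝ)/K) ^ ((2:ℝ)-α)), fun T' => ?_⟩
    have hx : ∑ t ∈ Finset.Icc 1 T', 2 * (K : ℝ) * (t : ℝ) ^ ((1 : ℝ) - α)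
        ≤ 2*(K:ℝ)*(∑' t : ℕ, (t:ℝ) ^ ((1:ℝ)-α)) := by
      rw [← Finset.mul_sum]
      refine mul_le_mul_of_nonneg_left ?_ (by positivity)
      exact Summable.sum_le_tsum _ (fun i _ => Real.rpow_nonneg (Nat.cast_nonneg i) _) hs1
    have hy : ∑ t ∈ Finset.Icc (K * t₀) T', 6 * ((t : ℝ) / K) ^ ((2 : ℝ) - α)
        ≤ ∑' t : ℕ, 6 * ((t:ℝ)/K) ^ ((2:ℝ)-α) := by
      refine Summable.sum_le_tsum _ (fun i _ => ?_) hs2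
      positivity
    have := mul_le_mul_of_nonneg_left hy (by positivity : (0:ℝ) ≤ (K:ℝ)^3)
    linarith
  refine ⟨?_, part2⟩
  -- Part 1
  by_cases h0 : 1 ≤ K * t₀
  swap
  · -- degenerate case: hypotheses are contradictory
    exfalso
    have hc := h2 0 (by omega) k hk
    have hset : {ω | ((0:ℕ):ℝ)/K ≤ (n k 0 ω : ℝ)} = Set.univ :=
      Set.eq_univ_of_forall (fun ω => by
        simp only [Set.mem_setOf_eq, Nat.cast_zero, zero_div]; positivity)
    rw [hset, measure_univ] at hc
    have : ((0:ℕ):ℝ)/K = 0 := by rw [Nat.cast_zero, zero_div]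
    rw [this, Real.zero_rpow (by intro h; linarith [sub_eq_zero.mp h] : (2:ℝ) - α ≠ 0),
      mul_zero, ENNReal.ofReal_zero] at hc
    simp at hc
  · haveI : Nonempty (Fin K) := ⟨k⟩
    have hmeas : ∀ s, MeasurableSet {ω | A s ω = k} := fun s => by
      have : {ω | A s ω = k} = A s ⁻¹' {k} := by ext ω; simp
      rw [this]; exact (hA s) (measurableSet_singleton k)
    -- integral equals sum of probabilities
    have hint : ∫ ω, (n k T ω : ℝ) ∂P
        = ∑ s ∈ Finset.Icc 1 T, (P {ω | A s ω = k}).toReal := by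
      have heq : ∀ ω, (n k T ω : ℝ)
          = ∑ s ∈ Finset.Icc 1 T, ({ω | A s ω = k}).indicator (1 : Ω → ℝ) ω := by
        intro ω
        rw [hn, Finset.card_filter, Nat.cast_sum]
        refine Finset.sum_congr rfl fun s _ => ?_
        by_cases h : A s ω = k <;> simp [Set.indicator_apply, h]
      calc ∫ ω, (n k T ω : ℝ) ∂P
          = ∫ ω, ∑ s ∈ Finset.Icc 1 T, ({ω | A s ω = k}).indicator (1 : Ω → ℝ) ω ∂P :=
        integral_congr_ae (Filter.Eventually.of_forall heq)
      _ = ∑ s ∈ Finset.Icc 1 T, ∫ ω, ({ω | A s ω = k}).indicator (1 : Ω → ℝ) ω ∂P :=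
        MeasureTheory.integral_finset_sum _
          (fun s _ => (integrable_const (1:ℝ)).indicator (hmeas s))
      _ = _ := Finset.sum_congr rfl fun s _ =>
        MeasureTheory.integral_indicator_one (hmeas s)
    -- key probability bound
    have key : ∀ t, K * t₀ ≤ t → (P {ω | A (t+1) ω = k}).toReal ≤
        2*(t:ℝ)^((1:ℝ)-α) + 6*(K:ℝ)^3*((t:ℝ)/K)^((2:ℝ)-α) := by
      intro t ht
      have hsub : {ω | A (t+1) ω = k} ⊆
          {ω | A (t + 1) ω = k ∧ n kstar t ω = Finset.univ.sup (fun j => n j t ω)} ∪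
          ⋃ k' ∈ Finset.univ.filter (fun j : Fin K => j ≠ kstar),
            {ω | (t:ℝ)/K ≤ (n k' t ω : ℝ)} := by
        intro ω hω
        by_cases hstar : n kstar t ω = Finset.univ.sup (fun j => n j t ω)
        · exact Or.inl ⟨hω, hstar⟩
        · right
          obtain ⟨j, -, hj⟩ := Finset.exists_mem_eq_sup Finset.univ
            Finset.univ_nonempty (fun j => n j t ω)
          have hjne : j ≠ kstar := by rintro rfl; exact hstar hj.symm
          have hsum : ∑ j' : Fin K, n j' t ω = t := by
            simp_rw [hn]
            rw [← Finset.card_eq_sum_card_fiberwise (fun x _ => Finset.mem_univ (A x ω))]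
            simp
          have hle : t ≤ K * n j t ω := by
            calc t = ∑ j' : Fin K, n j' t ω := hsum.symm
            _ ≤ ∑ _j' : Fin K, n j t ω :=
              Finset.sum_le_sum (fun j' _ => by
                rw [← hj]
                exact Finset.le_sup (f := fun j => n j t ω) (Finset.mem_univ j'))
            _ = K * n j t ω := by
              rw [Finset.sum_const, Finset.card_univ, Fintype.card_fin, smul_eq_mul]
          simp only [Set.mem_iUnion]
          refine ⟨j, by simp [hjne], ?_⟩
          show (t:ℝ)/K ≤ (n j t ω : ℝ)
          rw [div_le_iff₀ hKpos]
          calc (t:ℝ) ≤ ((K * n j t ω : ℕ) : ℝ) := by exact_mod_cast hle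
          _ = (n j t ω : ℝ) * K := by push_cast; ring
      have hP : P {ω | A (t+1) ω = k} ≤
          ENNReal.ofReal (2*(t:ℝ)^((1:ℝ)-α)) +
          ENNReal.ofReal (6*(K:ℝ)^3*((t:ℝ)/K)^((2:ℝ)-α)) := by
        calc P {ω | A (t+1) ω = k} ≤ _ := measure_mono hsub
        _ ≤ P {ω | A (t + 1) ω = k ∧ n kstar t ω = Finset.univ.sup (fun j => n j t ω)} +
            P (⋃ k' ∈ Finset.univ.filter (fun j : Fin K => j ≠ kstar),
              {ω | (t:ℝ)/K ≤ (n k' t ω : ℝ)}) := measure_union_le _ _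
        _ ≤ ENNReal.ofReal (2*(t:ℝ)^((1:ℝ)-α)) +
            ∑ k' ∈ Finset.univ.filter (fun j : Fin K => j ≠ kstar),
              P {ω | (t:ℝ)/K ≤ (n k' t ω : ℝ)} :=
          add_le_add (h1 t ht) (measure_biUnion_finset_le _ _)
        _ ≤ ENNReal.ofReal (2*(t:ℝ)^((1:ℝ)-α)) +
            ∑ _k' ∈ Finset.univ.filter (fun j : Fin K => j ≠ kstar),
              ENNReal.ofReal (6 * (K : ℝ) ^ 2 * ((t : ℝ) / K) ^ ((2 : ℝ) - α)) :=
          add_le_add le_rfl (Finset.sum_le_sum fun k' hk' =>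
            h2 t ht k' (by simpa using hk'))
        _ ≤ _ := by
          refine add_le_add le_rfl ?_
          rw [Finset.sum_const, nsmul_eq_mul]
          calc ((Finset.univ.filter (fun j : Fin K => j ≠ kstar)).card : ℝ≥0∞) *
              ENNReal.ofReal (6 * (K : ℝ) ^ 2 * ((t : ℝ) / K) ^ ((2 : ℝ) - α))
              ≤ (K : ℝ≥0∞) * ENNReal.ofReal (6 * (K : ℝ) ^ 2 * ((t : ℝ) / K) ^ ((2 : ℝ) - α)) := by
                refine mul_le_mul_left ?_ _
                exact_mod_cast (Finset.card_filter_le _ _).trans (le_of_eq (by simp))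
          _ = ENNReal.ofReal ((K:ℝ) * (6 * (K : ℝ) ^ 2 * ((t : ℝ) / K) ^ ((2 : ℝ) - α))) := by
                rw [ENNReal.ofReal_mul (le_of_lt hKpos), ENNReal.ofReal_natCast]
          _ = ENNReal.ofReal (6*(K:ℝ)^3*((t:ℝ)/K)^((2:ℝ)-α)) := by ring_nf
      refine ENNReal.toReal_le_of_le_ofReal (by positivity) ?_
      rw [ENNReal.ofReal_add (by positivity) (by positivity)]
      exact hP
    rw [hint]
    -- split the sum
    rw [← Finset.sum_filter_add_sum_filter_not (Finset.Icc 1 T) (fun s => s ≤ K * t₀)]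
    have hb1 : ∑ s ∈ (Finset.Icc 1 T).filter (fun s => s ≤ K * t₀),
        (P {ω | A s ω = k}).toReal ≤ ((K * t₀ : ℕ) : ℝ) := by
      calc _ ≤ ∑ _s ∈ (Finset.Icc 1 T).filter (fun s => s ≤ K * t₀), (1:ℝ) :=
        Finset.sum_le_sum (fun s _ => ENNReal.toReal_le_of_le_ofReal zero_le_one
          (by rw [ENNReal.ofReal_one]; exact prob_le_one))
      _ = ((Finset.Icc 1 T).filter (fun s => s ≤ K * t₀)).card := by
        rw [Finset.sum_const, nsmul_eq_mul, mul_one]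
      _ ≤ ((K * t₀ : ℕ) : ℝ) := by
        have : ((Finset.Icc 1 T).filter (fun s => s ≤ K * t₀)).card ≤ K * t₀ := by
          have hsub : ((Finset.Icc 1 T).filter (fun s => s ≤ K * t₀)) ⊆
              Finset.Icc 1 (K * t₀) := by
            intro s hs
            simp only [Finset.mem_filter, Finset.mem_Icc] at hs ⊢
            omega
          calc _ ≤ (Finset.Icc 1 (K * t₀)).card := Finset.card_le_card hsub
          _ = K * t₀ := by rw [Nat.card_Icc]; omega
        exact_mod_cast this
    have hfe : (Finset.Icc 1 T).filter (fun s => ¬ s ≤ K * t₀)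
        = (Finset.Icc (K * t₀) (T-1)).map (addRightEmbedding 1) := by
      rw [Finset.map_add_right_Icc]
      ext s
      simp only [Finset.mem_filter, Finset.mem_Icc]
      omega
    have hb2 : ∑ s ∈ (Finset.Icc 1 T).filter (fun s => ¬ s ≤ K * t₀),
        (P {ω | A s ω = k}).toReal ≤
        ∑ t ∈ Finset.Icc (K * t₀) T,
          (2*(t:ℝ)^((1:ℝ)-α) + 6*(K:ℝ)^3*((t:ℝ)/K)^((2:ℝ)-α)) := by
      rw [hfe, Finset.sum_map]
      simp only [addRightEmbedding_apply]
      calc ∑ t ∈ Finset.Icc (K * t₀) (T-1), (P {ω | A (t+1) ω = k}).toReal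
          ≤ ∑ t ∈ Finset.Icc (K * t₀) (T-1),
            (2*(t:ℝ)^((1:ℝ)-α) + 6*(K:ℝ)^3*((t:ℝ)/K)^((2:ℝ)-α)) :=
        Finset.sum_le_sum fun t ht => key t (Finset.mem_Icc.mp ht).1
      _ ≤ _ := Finset.sum_le_sum_of_subset_of_nonneg
        (Finset.Icc_subset_Icc_right (Nat.sub_le T 1)) (fun t _ _ => by positivity)
    have hb3 : ∑ t ∈ Finset.Icc (K * t₀) T,
          (2*(t:ℝ)^((1:ℝ)-α) + 6*(K:ℝ)^3*((t:ℝ)/K)^((2:ℝ)-α))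
        ≤ (∑ t ∈ Finset.Icc 1 T, 2 * (K : ℝ) * (t : ℝ) ^ ((1 : ℝ) - α)) +
          (K : ℝ) ^ 3 * ∑ t ∈ Finset.Icc (K * t₀) T, 6 * ((t : ℝ) / K) ^ ((2 : ℝ) - α) := by
      rw [Finset.sum_add_distrib, Finset.mul_sum]
      refine add_le_add ?_ (le_of_eq (Finset.sum_congr rfl fun t _ => by ring))
      calc ∑ t ∈ Finset.Icc (K * t₀) T, 2*(t:ℝ)^((1:ℝ)-α)
          ≤ ∑ t ∈ Finset.Icc (K * t₀) T, 2 * (K:ℝ) * (t:ℝ)^((1:ℝ)-α) :=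
        Finset.sum_le_sum fun t _ =>
          mul_le_mul_of_nonneg_right (by nlinarith [hKpos, hK1])
            (Real.rpow_nonneg (Nat.cast_nonneg t) _)
      _ ≤ _ := Finset.sum_le_sum_of_subset_of_nonneg
        (Finset.Icc_subset_Icc_left h0) (fun t _ _ => by positivity)
    push_cast at hb1 ⊢
    linarith
end

section
/- Let s ≥ t/(2K), α > 1, Δ > 0, σ > 0, and suppose t ≥ t₀ where t₀ satisfies Δ ≥ 4√(Kασ² log t₀ / t₀) (and t ↦ (log t)/t is decreasing on the relevant range so the inequality Δ ≥ 4√(Kασ² log t / t) holds for all t ≥ t₀ ≥ 3). Then 2t·exp(−(s/(2σ²))·(Δ − √(2ασ² log t / s))²) ≤ 4·t^{1−α}. -/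
open Real

/-- Key exponential estimate in the UCB-C competitive-arm analysis: for
`s ≥ t/(2K)` and `Δ ≥ 4√(Kασ² log t / t)` (with `t ≥ t₀ ≥ 3`),
`2t·exp(−(s/(2σ²))(Δ − √(2ασ² log t / s))²) ≤ 4t^{1−α}`. -/
theorem ucb_exponential_estimate
    (K : ℕ) (hK : 1 ≤ K) (α Δ σ t₀ t s : ℝ)
    (hα : 1 < α) (hΔ : 0 < Δ) (hσ : 0 < σ)
    (ht₀ : 3 ≤ t₀) (ht : t₀ ≤ t)
    (hs : t / (2 * K) ≤ s)
    (hΔt₀ : 4 * Real.sqrt (K * α * σ ^ 2 * Real.log t₀ / t₀) ≤ Δ)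
    (hΔt : 4 * Real.sqrt (K * α * σ ^ 2 * Real.log t / t) ≤ Δ) :
    2 * t * Real.exp (-(s / (2 * σ ^ 2)) *
        (Δ - Real.sqrt (2 * α * σ ^ 2 * Real.log t / s)) ^ 2) ≤
      4 * t ^ ((1 : ℝ) - α) := by
  have hKpos : (0:ℝ) < K := by exact_mod_cast hK
  have ht3 : (3:ℝ) ≤ t := le_trans ht₀ ht
  have htpos : (0:ℝ) < t := by linarith
  have hlogt : 0 < Real.log t := Real.log_pos (by linarith)
  have hspos : 0 < s := lt_of_lt_of_le (by positivity) hs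
  have hαpos : 0 < α := by linarith
  set X := K * α * σ ^ 2 * Real.log t / t with hX
  have hXnn : 0 ≤ X := by positivity
  have hY : 2 * α * σ ^ 2 * Real.log t / s ≤ 4 * X := by
    rw [hX, ← mul_div_assoc, div_le_div_iff₀ hspos htpos]
    have h2Ks : t ≤ 2 * K * s := by
      rw [div_le_iff₀ (by positivity)] at hs; linarith
    nlinarith [mul_pos hαpos hlogt, sq_nonneg σ, mul_nonneg (mul_nonneg hαpos.le (sq_nonneg σ)) hlogt.le]
  set B := Real.sqrt (2 * α * σ ^ 2 * Real.log t / s) with hB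
  have hBle : B ≤ Δ / 2 := by
    calc B ≤ Real.sqrt (4 * X) := Real.sqrt_le_sqrt hY
    _ = 2 * Real.sqrt X := by
        rw [show (4:ℝ) * X = (2:ℝ)^2 * X by ring, Real.sqrt_mul (by positivity),
          Real.sqrt_sq (by norm_num)]
    _ ≤ Δ / 2 := by linarith
  have hBnn : 0 ≤ B := Real.sqrt_nonneg _
  have hΔ2 : 16 * X ≤ Δ ^ 2 := by
    have := Real.sq_sqrt hXnn
    nlinarith [Real.sqrt_nonneg X]
  have hexp : α * Real.log t ≤ (s / (2 * σ ^ 2)) * (Δ - B) ^ 2 := by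
    have hsq : Δ ^ 2 / 4 ≤ (Δ - B) ^ 2 := by nlinarith
    have h1 : 4 * X ≤ (Δ - B) ^ 2 := by linarith
    have h2 : (s / (2 * σ ^ 2)) * (4 * X) ≤ (s / (2 * σ ^ 2)) * (Δ - B) ^ 2 :=
      mul_le_mul_of_nonneg_left h1 (by positivity)
    have h3 : α * Real.log t ≤ (s / (2 * σ ^ 2)) * (4 * X) := by
      rw [hX]
      have h2Ks : t ≤ 2 * K * s := by
        rw [div_le_iff₀ (by positivity)] at hs; linarith
      have key : s / (2 * σ ^ 2) * (4 * (↑K * α * σ ^ 2 * Real.log t / t))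
          = 2 * ↑K * α * Real.log t * s / t := by
        field_simp; ring
      rw [key, le_div_iff₀ htpos]
      nlinarith [mul_pos hαpos hlogt]
    linarith
  have hexp2 : Real.exp (-(s / (2 * σ ^ 2)) * (Δ - B) ^ 2) ≤ t ^ (-α) := by
    rw [Real.rpow_def_of_pos htpos]
    apply Real.exp_le_exp.mpr
    have h : Real.log t * (-α) = -(α * Real.log t) := by ring
    rw [h]
    linarith
  calc 2 * t * Real.exp (-(s / (2 * σ ^ 2)) * (Δ - B) ^ 2)
      ≤ 2 * t * t ^ (-α) := by
        apply mul_le_mul_of_nonneg_left hexp2 (by positivity)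
    _ = 2 * t ^ ((1:ℝ) - α) := by
        rw [show (1:ℝ) - α = 1 + (-α) by ring, Real.rpow_add htpos, Real.rpow_one]; ring
    _ ≤ 4 * t ^ ((1:ℝ) - α) := by
        have : (0:ℝ) ≤ t ^ ((1:ℝ) - α) := by positivity
        linarith
end
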